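/- arXiv:1405.7859 — 3 statements merged into one kernel-verified Lean document; each statement's English description precedes it below -/
import Mathlib

section
/- Let G be a simple graph and U a set of vertices of G such that N(U) induces a clique in G, the subgraph of G induced by N[U] is chordal, and the subgraph G − U obtained by deleting the vertices of U is chordal. Then G itself is chordal. -/
/-!
A hole of `G` either avoids `U`, and then it is a hole of `G − U`, or it passes through some
`u ∈ U`. In the second case it stays inside `N[U]`: otherwise pick `w` on it outside `N[U]`.
Both arcs of the hole from `u` to `w` must cross `N(U)`, and two vertices of `N(U)` on
different arcs are adjacent because `N(U)` is a clique, giving a chord. So the hole is a hole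
of `G[N[U]]`.
-/

open SimpleGraph

variable {V : Type*}

/-- A *hole* is an induced cycle on at least 4 vertices, given as a closed walk:
the walk is a cycle of length at least 4, and any edge of `G` between support
vertices is an edge of the cycle. -/
def IsHole (G : SimpleGraph V) {v : V} (c : G.Walk v v) : Prop :=
  c.IsCycle ∧ 4 ≤ c.length ∧
    ∀ x y : V, x ∈ c.support → y ∈ c.support → G.Adj x y → c.toSubgraph.Adj x y

/-- A graph is *chordal* if it contains no hole. -/
def ChordalGraph (G : SimpleGraph V) : Prop :=
  ∀ (v : V) (c : G.Walk v v), ¬ IsHole G c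

/-- `N(X)`: the set of vertices outside `X` having a neighbor in `X`. -/
def extNbhd (G : SimpleGraph V) (X : Set V) : Set V :=
  {v | v ∉ X ∧ ∃ x ∈ X, G.Adj v x}

namespace SimpleGraph.Walk

variable {G : SimpleGraph V} {u w x : V}

lemma IsCycle.eq_or_eq_of_mem_takeUntil_of_mem_dropUntil [DecidableEq V] {c : G.Walk u u}
    (hc : c.IsCycle) (hw : w ∈ c.support) (hx₁ : x ∈ (c.takeUntil w hw).support)
    (hx₂ : x ∈ (c.dropUntil w hw).support) : x = u ∨ x = w := by
  have hnodup := hc.support_nodup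
  rw [← c.take_spec hw, tail_support_append] at hnodup
  rw [← cons_tail_support] at hx₁ hx₂
  rcases List.mem_cons.1 hx₁ with rfl | hx₁
  · exact .inl rfl
  rcases List.mem_cons.1 hx₂ with rfl | hx₂
  · exact .inr rfl
  exact (List.disjoint_of_nodup_append hnodup hx₁ hx₂).elim

lemma exists_mem_support_mem_extNbhd {U : Set V} (p : G.Walk u w) (hu : u ∈ U)
    (hw : w ∉ U ∪ extNbhd G U) : ∃ a ∈ p.support, a ∈ extNbhd G U := by
  obtain ⟨d, hd, hfst, hsnd⟩ := p.exists_boundary_dart _ (Or.inl hu) hw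
  refine ⟨d.fst, dart_fst_mem_support_of_mem_darts p hd, hfst.resolve_left fun hU ↦ ?_⟩
  exact hsnd (.inr ⟨fun h ↦ hsnd (.inl h), d.fst, hU, d.adj.symm⟩)

end SimpleGraph.Walk

open SimpleGraph.Walk

namespace IsHole

variable {G : SimpleGraph V} {u v w a b : V} {c : G.Walk v v}

lemma rotate [DecidableEq V] (hc : IsHole G c) (hu : u ∈ c.support) :
    IsHole G (c.rotate u hu) := by
  obtain ⟨hcyc, hlen, hchord⟩ := hc
  refine ⟨hcyc.rotate hu, by rwa [length_rotate], fun x y hx hy hxy ↦ ?_⟩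
  rw [toSubgraph_rotate]
  exact hchord x y ((mem_support_rotate_iff ..).1 hx) ((mem_support_rotate_iff ..).1 hy) hxy

lemma induce {S : Set V} (hc : IsHole G c) (hS : ∀ x ∈ c.support, x ∈ S) :
    IsHole (G.induce S) (c.induce S hS) := by
  obtain ⟨hcyc, hlen, hchord⟩ := hc
  have hmap := c.map_induce hS
  have hedges : (c.induce S hS).edges.map (Sym2.map Subtype.val) = c.edges :=
    (edges_map (Embedding.induce S).toHom _).symm.trans
      (congrArg (fun p : G.Walk v v ↦ p.edges) hmap)
  refine ⟨?_, ?_, fun x y hx hy hxy ↦ ?_⟩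
  · rwa [← isCycle_map_iff_of_injective (f := (Embedding.induce S).toHom) Subtype.val_injective,
      hmap]
  · rwa [← length_map (Embedding.induce S).toHom, hmap]
  · have hchord := hchord x y (by simpa using hx) (by simpa using hy) hxy
    rw [adj_toSubgraph_iff_mem_edges, ← hedges, ← Sym2.map_mk,
      List.mem_map_of_injective (Sym2.map.injective Subtype.val_injective)] at hchord
    exact adj_toSubgraph_iff_mem_edges.2 hchord

lemma not_adj_of_mem_takeUntil_of_mem_dropUntil [DecidableEq V] {c : G.Walk u u}
    (hc : IsHole G c) (hw : w ∈ c.support) (ha : a ∈ (c.takeUntil w hw).support)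
    (hb : b ∈ (c.dropUntil w hw).support) (hau : a ≠ u) (haw : a ≠ w) (hbu : b ≠ u)
    (hbw : b ≠ w) : ¬ G.Adj a b := by
  intro hab
  have hedge : s(a, b) ∈ c.edges := adj_toSubgraph_iff_mem_edges.1 <|
    hc.2.2 a b (c.support_takeUntil_subset_support hw ha)
      (c.support_dropUntil_subset_support hw hb) hab
  rw [← c.take_spec hw, edges_append, List.mem_append] at hedge
  rcases hedge with hedge | hedge
  · have := hc.1.eq_or_eq_of_mem_takeUntil_of_mem_dropUntil hw
      ((c.takeUntil w hw).snd_mem_support_of_mem_edges hedge) hb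
    tauto
  · have := hc.1.eq_or_eq_of_mem_takeUntil_of_mem_dropUntil hw ha
      ((c.dropUntil w hw).fst_mem_support_of_mem_edges hedge)
    tauto

lemma support_subset_of_isClique_extNbhd {U : Set V} {c : G.Walk u u} (hc : IsHole G c)
    (hu : u ∈ U) (hclique : G.IsClique (extNbhd G U)) :
    ∀ x ∈ c.support, x ∈ U ∪ extNbhd G U := by
  classical
  by_contra! ⟨w, hw, hwU⟩
  obtain ⟨a, ha, haN⟩ := (c.takeUntil w hw).exists_mem_support_mem_extNbhd hu hwU
  obtain ⟨b, hb, hbN⟩ := (c.dropUntil w hw).reverse.exists_mem_support_mem_extNbhd hu hwU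
  rw [support_reverse, List.mem_reverse] at hb
  have hne : ∀ {x}, x ∈ extNbhd G U → x ≠ u ∧ x ≠ w := fun hx ↦
    ⟨fun h ↦ hx.1 (h ▸ hu), fun h ↦ hwU (.inr (h ▸ hx))⟩
  have hab : a ≠ b := fun h ↦
    (hc.1.eq_or_eq_of_mem_takeUntil_of_mem_dropUntil hw ha (h ▸ hb)).elim (hne haN).1 (hne haN).2
  exact hc.not_adj_of_mem_takeUntil_of_mem_dropUntil hw ha hb (hne haN).1 (hne haN).2
    (hne hbN).1 (hne hbN).2 (hclique haN hbN hab)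

end IsHole

/-- If `N(U)` induces a clique, `G[N[U]]` is chordal, and `G − U`
is chordal, then `G` is chordal. -/
theorem stmt4 {V : Type*} (G : SimpleGraph V) (U : Set V)
    (hclique : G.IsClique (extNbhd G U))
    (hchordal₁ : ChordalGraph (G.induce (U ∪ extNbhd G U)))
    (hchordal₂ : ChordalGraph (G.induce Uᶜ)) :
    ChordalGraph G := by
  classical
  intro v c hc
  by_cases hU : ∃ u ∈ c.support, u ∈ U
  · obtain ⟨u, hu, huU⟩ := hU
    have hc' := hc.rotate hu
    exact hchordal₁ _ _ (hc'.induce (hc'.support_subset_of_isClique_extNbhd huU hclique))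
  · push Not at hU
    exact hchordal₂ _ _ (hc.induce hU)
end

section
/- Let F be a chordal simple graph, let x and y be nonadjacent vertices of F, and let (V_S, E_S) be an inclusion-wise minimal mixed x–y separator of F. Then every connected component of the graph F − V_S − E_S, obtained by deleting the vertices V_S and the edges E_S, induces a chordal graph. -/
open SimpleGraph

variable {V : Type*}

/-- The graph `F − Vs − Es` obtained from `F` by deleting the vertices of `Vs`
(all edges incident to them are removed) and deleting the edges of `Es`. -/
def deleteVE (F : SimpleGraph V) (Vs : Set V) (Es : Set (Sym2 V)) : SimpleGraph V where
  Adj a b := F.Adj a b ∧ a ∉ Vs ∧ b ∉ Vs ∧ s(a, b) ∉ Es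
  symm := by
    constructor
    intro a b h
    exact ⟨h.1.symm, h.2.2.1, h.2.1, by rw [Sym2.eq_swap]; exact h.2.2.2⟩
  loopless := by constructor; intro a h; exact F.irrefl h.1

/-- `(Vs, Es)` is a mixed `x`–`y` separator of `F`: `Vs` avoids `x` and `y`,
`Es` consists of edges of `F`, and `x` and `y` lie in different connected
components of `F − Vs − Es`. -/
def IsMixedSeparator (F : SimpleGraph V) (x y : V) (Vs : Set V) (Es : Set (Sym2 V)) : Prop :=
  Vs ⊆ ({x, y} : Set V)ᶜ ∧ Es ⊆ F.edgeSet ∧ ¬ (deleteVE F Vs Es).Reachable x y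

/-!
Minimality makes each component `C` of `F − Vs − Es` an induced subgraph of `F`: a vertex of
`Vs` is isolated in `F − Vs − Es`, so an `F`-edge `ab` inside `C` avoids `Vs`; and if `ab` were
in `Es`, putting it back would not connect anything new (`a` and `b` are already joined in `C`),
so `(Vs, Es \ {ab})` would be a smaller separator. Induced subgraphs of chordal graphs are chordal.
-/

namespace ChordalGraph

variable {V W : Type*} {G : SimpleGraph V} {F : SimpleGraph W}

theorem comap (hF : ChordalGraph F) (f : G ↪g F) : ChordalGraph G := by
  rintro v c ⟨hcyc, hlen, hinduced⟩
  refine hF (f v) (c.map f.toHom) ⟨hcyc.map f.injective, by rwa [Walk.length_map], ?_⟩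
  intro p q hp hq hpq
  simp only [Walk.support_map, List.mem_map] at hp hq
  obtain ⟨p, hp, rfl⟩ := hp
  obtain ⟨q, hq, rfl⟩ := hq
  rw [Walk.toSubgraph_map]
  exact ⟨p, q, hinduced p q hp hq (f.map_adj_iff.mp hpq), rfl, rfl⟩

theorem induce (hG : ChordalGraph G) (s : Set V) : ChordalGraph (G.induce s) :=
  hG.comap (Embedding.induce s)

end ChordalGraph

section MixedSeparator

variable {V : Type*} {F : SimpleGraph V} {x y : V} {Vs : Set V} {Es : Set (Sym2 V)}

theorem eq_of_deleteVE_reachable_of_mem {a b : V} (hab : (deleteVE F Vs Es).Reachable a b)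
    (ha : a ∈ Vs) : a = b := by
  obtain ⟨_ | ⟨hadj, _⟩⟩ := hab
  · rfl
  · exact absurd ha hadj.2.1

theorem deleteVE_reachable_of_diff_singleton {a b u v : V}
    (hab : (deleteVE F Vs Es).Reachable a b)
    (huv : (deleteVE F Vs (Es \ {s(a, b)})).Reachable u v) :
    (deleteVE F Vs Es).Reachable u v := by
  rw [reachable_iff_reflTransGen] at huv ⊢
  refine huv.lift' id fun c d hcd => (reachable_iff_reflTransGen c d).mp ?_
  by_cases hEs : s(c, d) ∈ Es
  · obtain ⟨rfl, rfl⟩ | ⟨rfl, rfl⟩ := Sym2.eq_iff.mp (by_contra fun hne => hcd.2.2.2 ⟨hEs, hne⟩)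
    · exact hab
    · exact hab.symm
  · exact Adj.reachable ⟨hcd.1, hcd.2.1, hcd.2.2.1, hEs⟩

theorem IsMixedSeparator.diff_singleton (hsep : IsMixedSeparator F x y Vs Es) {a b : V}
    (hab : (deleteVE F Vs Es).Reachable a b) : IsMixedSeparator F x y Vs (Es \ {s(a, b)}) :=
  ⟨hsep.1, Set.sdiff_subset.trans hsep.2.1,
    fun hxy => hsep.2.2 (deleteVE_reachable_of_diff_singleton hab hxy)⟩

theorem IsMixedSeparator.deleteVE_adj_of_reachable (hsep : IsMixedSeparator F x y Vs Es)
    (hmin : ∀ Es', IsMixedSeparator F x y Vs Es' → Es' ⊆ Es → Es' = Es) {a b : V}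
    (hab : (deleteVE F Vs Es).Reachable a b) (hadj : F.Adj a b) :
    (deleteVE F Vs Es).Adj a b := by
  refine ⟨hadj, fun ha => hadj.ne (eq_of_deleteVE_reachable_of_mem hab ha),
    fun hb => hadj.ne' (eq_of_deleteVE_reachable_of_mem hab.symm hb), fun he => ?_⟩
  rw [← hmin _ (hsep.diff_singleton hab) Set.sdiff_subset] at he
  exact he.2 rfl

theorem IsMixedSeparator.induce_supp_deleteVE (hsep : IsMixedSeparator F x y Vs Es)
    (hmin : ∀ Es', IsMixedSeparator F x y Vs Es' → Es' ⊆ Es → Es' = Es)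
    (C : (deleteVE F Vs Es).ConnectedComponent) :
    (deleteVE F Vs Es).induce C.supp = F.induce C.supp := by
  ext a b
  exact ⟨fun h => h.1, hsep.deleteVE_adj_of_reachable hmin (C.reachable_of_mem_supp a.2 b.2)⟩

end MixedSeparator

theorem stmt7_general {V : Type*} (F : SimpleGraph V) (hF : ChordalGraph F)
    (x y : V)
    (Vs : Set V) (Es : Set (Sym2 V))
    (hsep : IsMixedSeparator F x y Vs Es)
    (hmin : ∀ (Vs' : Set V) (Es' : Set (Sym2 V)),
      IsMixedSeparator F x y Vs' Es' → Vs' ⊆ Vs → Es' ⊆ Es → Vs' = Vs ∧ Es' = Es) :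
    ∀ C : (deleteVE F Vs Es).ConnectedComponent,
      ChordalGraph ((deleteVE F Vs Es).induce C.supp) := by
  intro C
  rw [hsep.induce_supp_deleteVE (fun Es' hsep' hEs => (hmin Vs Es' hsep' subset_rfl hEs).2) C]
  exact hF.induce C.supp

/-- Let `F` be a chordal graph and `(Vs, Es)` an inclusion-wise
minimal mixed `x`–`y` separator of `F` (with `x`, `y` nonadjacent).  Then every
connected component of `F − Vs − Es` induces a chordal graph. -/
theorem stmt7 {V : Type*} (F : SimpleGraph V) (hF : ChordalGraph F)
    (x y : V) (hxy : ¬ F.Adj x y)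
    (Vs : Set V) (Es : Set (Sym2 V))
    (hsep : IsMixedSeparator F x y Vs Es)
    (hmin : ∀ (Vs' : Set V) (Es' : Set (Sym2 V)),
      IsMixedSeparator F x y Vs' Es' → Vs' ⊆ Vs → Es' ⊆ Es → Vs' = Vs ∧ Es' = Es) :
    ∀ C : (deleteVE F Vs Es).ConnectedComponent,
      ChordalGraph ((deleteVE F Vs Es).induce C.supp) :=
  stmt7_general F hF x y Vs Es hsep hmin
end

section
/- Let G be a simple graph and M ⊆ V(G) such that G − M is chordal. Let H be a hole of G, let A be the set of vertices of G adjacent to every vertex of H, let A_0 = A ∖ M, and let V_0 = V(G) ∖ (M ∪ A). Let u and v be two vertices of H lying in V_0. Then every vertex x lying on some induced u–v path of the induced subgraph G[V_0] is adjacent to every vertex y ∈ A_0 (or equals no vertex of A_0, since V_0 and A_0 are disjoint); that is, the set of vertices of induced u–v paths in G[V_0] is completely connected to A_0. -/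
/-!
The vertices of `G[V₀]` avoid `M`, so the induced path stays an induced path of the chordal
graph `G − M`, and `y ∈ A₀` is a vertex of `G − M` off the path that is adjacent to both its
ends (they lie on the hole). In a chordal graph such a vertex sees the whole path: if `y` has
a neighbour strictly inside the path, split there and induct on the length; otherwise a vertex
missed by `y` is interior, so the path has length at least 2 and closes up through `y` into a
hole.
-/

open SimpleGraph

variable {V : Type*}

namespace SimpleGraph.Walk

variable {G : SimpleGraph V}

lemma two_le_length_of_mem_support {a b x : V} {q : G.Walk a b} (hx : x ∈ q.support)
    (hxa : x ≠ a) (hxb : x ≠ b) : 2 ≤ q.length := by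
  rcases q with _ | ⟨_, _ | ⟨_, _⟩⟩
  · simp_all
  · simp_all
  · simp

lemma IsPath.eq_of_mem_support_append {u v w x : V} {p : G.Walk u v} {q : G.Walk v w}
    (hpq : (p.append q).IsPath) (hp : x ∈ p.support) (hq : x ∈ q.support) : x = v := by
  by_contra hxv
  exact hpq.ne_of_mem_support_of_append hxv hp hq rfl

lemma IsChordless.of_append_left {u v w : V} {p : G.Walk u v} {q : G.Walk v w}
    (hpq : (p.append q).IsPath) (h : (p.append q).IsChordless) : p.IsChordless := by
  refine isChordless_iff_forall_mem_edges.mpr fun x z hx hz hxz => ?_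
  have hmem := h.mem_edges ((mem_support_append_iff p q).mpr (.inl hx))
    ((mem_support_append_iff p q).mpr (.inl hz)) hxz
  rw [edges_append, List.mem_append] at hmem
  refine hmem.resolve_right fun hq => hxz.ne ?_
  rw [hpq.eq_of_mem_support_append hx (q.fst_mem_support_of_mem_edges hq),
    hpq.eq_of_mem_support_append hz (q.snd_mem_support_of_mem_edges hq)]

lemma IsChordless.of_append_right {u v w : V} {p : G.Walk u v} {q : G.Walk v w}
    (hpq : (p.append q).IsPath) (h : (p.append q).IsChordless) : q.IsChordless := by
  refine isChordless_iff_forall_mem_edges.mpr fun x z hx hz hxz => ?_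
  have hmem := h.mem_edges ((mem_support_append_iff p q).mpr (.inr hx))
    ((mem_support_append_iff p q).mpr (.inr hz)) hxz
  rw [edges_append, List.mem_append] at hmem
  refine hmem.resolve_left fun hp => hxz.ne ?_
  rw [hpq.eq_of_mem_support_append (p.fst_mem_support_of_mem_edges hp) hx,
    hpq.eq_of_mem_support_append (p.snd_mem_support_of_mem_edges hp) hz]

lemma IsChordless.map {W : Type*} {G' : SimpleGraph W} (f : G ↪g G') {u v : V}
    {p : G.Walk u v} (h : p.IsChordless) : (p.map f.toHom).IsChordless := by
  refine isChordless_iff_forall_mem_edges.mpr fun x' z' hx hz hxz => ?_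
  rw [support_map, List.mem_map] at hx hz
  obtain ⟨x, hx, rfl⟩ := hx
  obtain ⟨z, hz, rfl⟩ := hz
  rw [edges_map, List.mem_map]
  exact ⟨s(x, z), h.mem_edges hx hz (f.map_adj_iff.mp hxz), rfl⟩

end SimpleGraph.Walk

open SimpleGraph.Walk

section

variable {G : SimpleGraph V}

lemma isHole_cons_concat {a b y : V} {q : G.Walk a b} (hq : q.IsPath) (hc : q.IsChordless)
    (hlen : 2 ≤ q.length) (hy : y ∉ q.support) (ha : G.Adj y a) (hb : G.Adj b y)
    (hint : ∀ x ∈ q.support, G.Adj y x → x = a ∨ x = b) :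
    IsHole G (cons ha (q.concat hb)) := by
  have hab : a ≠ b := by
    rintro rfl
    rw [(isPath_iff_nil.mp hq).eq_nil] at hlen
    simp at hlen
  refine ⟨?_, by simp; omega, fun x z hx hz hxz => ?_⟩
  · rw [cons_isCycle_iff, concat_isPath_iff, edges_concat, List.concat_eq_append]
    refine ⟨⟨hq, hy⟩, fun hmem => ?_⟩
    rcases List.mem_append.mp hmem with h | h
    · exact hy (q.fst_mem_support_of_mem_edges h)
    · simp only [List.mem_singleton, Sym2.eq_iff] at h
      grind [q.end_mem_support]
  · have hspoke : ∀ w ∈ q.support, G.Adj y w → s(y, w) = s(y, a) ∨ s(y, w) = s(b, y) := by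
      intro w hw hyw
      rcases hint w hw hyw with rfl | rfl
      · exact .inl rfl
      · exact .inr Sym2.eq_swap
    rw [adj_toSubgraph_iff_mem_edges, edges_cons, edges_concat, List.concat_eq_append]
    simp only [support_cons, support_concat, List.mem_cons, List.mem_append] at hx hz ⊢
    replace hx : x = y ∨ x ∈ q.support := by tauto
    replace hz : z = y ∨ z ∈ q.support := by tauto
    rcases hx with rfl | hx <;> rcases hz with rfl | hz
    · exact (hxz.ne rfl).elim
    · have := hspoke z hz hxz
      tauto
    · have := hspoke x hx hxz.symm
      rw [Sym2.eq_swap] at this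
      tauto
    · exact .inr (.inl (hc.mem_edges hx hz hxz))

theorem ChordalGraph.adj_of_isChordless_path (hG : ChordalGraph G) {a b y : V}
    {q : G.Walk a b} (hq : q.IsPath) (hc : q.IsChordless) (hy : y ∉ q.support)
    (ha : G.Adj y a) (hb : G.Adj y b) {x : V} (hx : x ∈ q.support) : G.Adj y x := by
  induction hn : q.length using Nat.strong_induction_on generalizing a b q with
  | _ n ih =>
  by_cases hspokes : ∀ w ∈ q.support, G.Adj y w → w = a ∨ w = b
  · by_contra hxy
    have hxa : x ≠ a := fun h => hxy (h ▸ ha)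
    have hxb : x ≠ b := fun h => hxy (h ▸ hb)
    exact hG _ _ (isHole_cons_concat hq hc (two_le_length_of_mem_support hx hxa hxb) hy ha
      hb.symm hspokes)
  · push Not at hspokes
    obtain ⟨w, hw, hyw, hwa, hwb⟩ := hspokes
    obtain ⟨q₁, q₂, rfl⟩ := mem_support_iff_exists_append.mp hw
    have h₁ : q₁.length ≠ 0 := fun h => hwa (eq_of_length_eq_zero h).symm
    have h₂ : q₂.length ≠ 0 := fun h => hwb (eq_of_length_eq_zero h)
    rw [length_append] at hn
    rw [mem_support_append_iff] at hx hy
    rcases hx with hx | hx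
    · exact ih _ (by omega) hq.of_append_left (hc.of_append_left hq) (by tauto) ha hyw hx rfl
    · exact ih _ (by omega) hq.of_append_right (hc.of_append_right hq) (by tauto) hyw hb hx rfl

end

theorem stmt9_general {V : Type*} (G : SimpleGraph V) (M : Set V)
    (hM : ChordalGraph (G.induce Mᶜ))
    {h₀ : V} (c : G.Walk h₀ h₀)
    (A : Set V) (hA : A = {z : V | ∀ w ∈ c.support, G.Adj z w})
    (V₀ : Set V) (hV₀ : V₀ = (M ∪ A)ᶜ)
    (u v : V₀) (hu : (u : V) ∈ c.support) (hv : (v : V) ∈ c.support)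
    (p : (G.induce V₀).Walk u v) (hpath : p.IsPath)
    (hinduced : ∀ a b : V₀, a ∈ p.support → b ∈ p.support →
      (G.induce V₀).Adj a b → p.toSubgraph.Adj a b)
    (x : V₀) (hx : x ∈ p.support) (y : V) (hy : y ∈ A \ M) :
    G.Adj (x : V) y := by
  subst hV₀
  have hV₀M : (M ∪ A)ᶜ ⊆ Mᶜ := Set.compl_subset_compl.mpr Set.subset_union_left
  let f := G.induceHomOfLE hV₀M
  have hyc : ∀ w ∈ c.support, G.Adj y w := by
    rw [hA] at hy
    exact hy.1
  have hyq : (⟨y, hy.2⟩ : (Mᶜ : Set V)) ∉ (p.map f.toHom).support := by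
    rw [Walk.support_map, List.mem_map]
    rintro ⟨z, -, hz⟩
    exact z.2 (.inr (congrArg Subtype.val hz ▸ hy.1))
  have hc : p.IsChordless := isChordless_iff_forall_mem_edges.mpr fun a b ha hb hab =>
    adj_toSubgraph_iff_mem_edges.mp (hinduced a b ha hb hab)
  exact (hM.adj_of_isChordless_path (hpath.map f.injective) (hc.map f) hyq (hyc u hu)
    (hyc v hv) (by rw [Walk.support_map]; exact List.mem_map_of_mem hx)).symm

/-- Let `M ⊆ V(G)` with `G − M` chordal, let `H` (the walk `c`) be
a hole of `G`, let `A` be the set of vertices adjacent to every vertex of `H`,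
`A₀ = A \ M`, and `V₀ = V(G) \ (M ∪ A)`.  For vertices `u, v` of `H` lying in `V₀`,
every vertex `x` on some induced `u`–`v` path of `G[V₀]` is adjacent to every
vertex `y ∈ A₀`; that is, the set of vertices of induced `u`–`v` paths in `G[V₀]`
is completely connected to `A₀`. -/
theorem stmt9 {V : Type*} (G : SimpleGraph V) (M : Set V)
    (hM : ChordalGraph (G.induce Mᶜ))
    {h₀ : V} (c : G.Walk h₀ h₀) (hhole : IsHole G c)
    (A : Set V) (hA : A = {z : V | ∀ w ∈ c.support, G.Adj z w})
    (V₀ : Set V) (hV₀ : V₀ = (M ∪ A)ᶜ)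
    (u v : V₀) (hu : (u : V) ∈ c.support) (hv : (v : V) ∈ c.support)
    (p : (G.induce V₀).Walk u v) (hpath : p.IsPath)
    (hinduced : ∀ a b : V₀, a ∈ p.support → b ∈ p.support →
      (G.induce V₀).Adj a b → p.toSubgraph.Adj a b)
    (x : V₀) (hx : x ∈ p.support) (y : V) (hy : y ∈ A \ M) :
    G.Adj (x : V) y :=
  stmt9_general G M hM c A hA V₀ hV₀ u v hu hv p hpath hinduced x hx y hy
end
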